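/- Let X be a Banach space with a monotone unconditional basis {e_i}_{i∈I}: there are biorthogonal functionals {e_i^*} ⊂ X*, for each finite σ ⊂ I the projection P_σ(x) = Σ_{i∈σ} e_i^*(x) e_i satisfies ‖P_σ(x)‖ ≤ ‖x‖ for all x, and for every x ∈ X the net (P_σ(x))_{σ finite} converges in norm to x. Suppose S_X = ⋃_{n=1}^∞ S_n in such a way that the numbers b_n = inf{ sup{‖P_σ(x)‖ : σ ⊂ I, card(σ) = n} : x ∈ S_n } are strictly positive and converge to 1. Then X admits an equivalent polyhedral norm supporting a boundary having property (*). -/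

import Mathlib

open NormedSpace Filter Set Topology Pointwise

noncomputable section

/-- `g` is a weak-* limit point of `F`: every weak-* neighbourhood of `g`
contains infinitely many points of `F`. -/
def IsWeakStarLimitPoint {X : Type*} [NormedAddCommGroup X] [NormedSpace ℝ X]
    (F : Set (StrongDual ℝ X)) (g : StrongDual ℝ X) : Prop :=
  ∀ U : Set (WeakDual ℝ X), IsOpen U → StrongDual.toWeakDual g ∈ U →
    {f : StrongDual ℝ X | f ∈ F ∧ StrongDual.toWeakDual f ∈ U}.Infinite

/-- Property (*) of a set of functionals. -/
def PropertyStar {X : Type*} [NormedAddCommGroup X] [NormedSpace ℝ X]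
    (F : Set (StrongDual ℝ X)) : Prop :=
  ∀ g : StrongDual ℝ X, IsWeakStarLimitPoint F g →
    ∀ x : X, sSup ((fun f : StrongDual ℝ X => f x) '' F) = 1 → g x < 1

/-- `F` is a relative boundary. -/
def IsRelativeBoundary {X : Type*} [NormedAddCommGroup X] [NormedSpace ℝ X]
    (F : Set (StrongDual ℝ X)) : Prop :=
  ∀ x : X, sSup ((fun f : StrongDual ℝ X => f x) '' F) = 1 → ∃ f ∈ F, f x = 1

/-- `B` is a boundary for the norm `ν`: every element of `B` lies in the
`ν`-dual unit ball, and every `ν`-unit vector attains the value 1 at some member of `B`. -/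
def IsBoundaryFor {X : Type*} [NormedAddCommGroup X] [NormedSpace ℝ X]
    (ν : X → ℝ) (B : Set (StrongDual ℝ X)) : Prop :=
  (∀ f ∈ B, ∀ x : X, f x ≤ ν x) ∧ ∀ x : X, ν x = 1 → ∃ f ∈ B, f x = 1

/-- `ν` is an equivalent norm on `X`. -/
def IsEquivNorm {X : Type*} [NormedAddCommGroup X] [NormedSpace ℝ X]
    (ν : Seminorm ℝ X) : Prop :=
  ∃ c C : ℝ, 0 < c ∧ ∀ x : X, c * ‖x‖ ≤ ν x ∧ ν x ≤ C * ‖x‖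

/-- A norm (given as a function) is polyhedral if the unit ball of every
finite-dimensional subspace is a polytope, i.e. the convex hull of finitely many points. -/
def IsPolyhedralNorm {X : Type*} [NormedAddCommGroup X] [NormedSpace ℝ X]
    (ν : X → ℝ) : Prop :=
  ∀ Y : Subspace ℝ X, FiniteDimensional ℝ Y →
    ∃ T : Set X, T.Finite ∧ {x : X | x ∈ Y ∧ ν x ≤ 1} = convexHull ℝ T

/-- `E ⊆ X*` is weak-* locally relatively norm-compact. -/
def IsWeakStarLRC {X : Type*} [NormedAddCommGroup X] [NormedSpace ℝ X]
    (E : Set (StrongDual ℝ X)) : Prop :=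
  ∀ y ∈ E, ∃ U : Set (WeakDual ℝ X), IsOpen U ∧ StrongDual.toWeakDual y ∈ U ∧
    IsCompact (closure (E ∩ (fun f : StrongDual ℝ X => StrongDual.toWeakDual f) ⁻¹' U))

/-- `E` is a countable union of weak-* LRC sets. -/
def IsSigmaWeakStarLRC {X : Type*} [NormedAddCommGroup X] [NormedSpace ℝ X]
    (E : Set (StrongDual ℝ X)) : Prop :=
  ∃ E' : ℕ → Set (StrongDual ℝ X), E = ⋃ n, E' n ∧ ∀ n, IsWeakStarLRC (E' n)

/-- `E` is a countable union of weak-*-compact sets. -/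
def IsWeakStarSigmaCompact {X : Type*} [NormedAddCommGroup X] [NormedSpace ℝ X]
    (E : Set (StrongDual ℝ X)) : Prop :=
  ∃ C : ℕ → Set (WeakDual ℝ X), (∀ n, IsCompact (C n)) ∧
    (fun f : StrongDual ℝ X => StrongDual.toWeakDual f) '' E = ⋃ n, C n


/-!
Choose weights `w k ↓ 1` and precisions `r k < 1` with `w (k + 1) < r k * w k` and
`r n * w n * b n > 1`, and let `D` consist of the functionals `w |σ| • g ∘ P σ`, where `g` runs
over a finite symmetric `r |σ|`-norming subset of the dual unit ball of the range of `P σ`.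
Its support function `ν x = sup_{f ∈ D} f x` is an equivalent norm. If `ν x = 1`, then
`x / ‖x‖ ∈ S n` for some `n`, and `r n * w n * b n > 1` gives `‖x‖ < 1`, so
projections onto large sets stay away from `1`; for small `σ`, the gap `w (k + 1) < r k * w k`
together with the smallness of the tails of `x` confines `σ` to a fixed finite set. Hence only
finitely many members of `D` come close to `1` at `x`. This local finiteness yields attainment
of the supremum, property (*), and, by compactness of the unit spheres of finite-dimensional
subspaces, polyhedrality via Krein–Milman.
-/

section FiniteDimensional

variable {X : Type*} [NormedAddCommGroup X] [NormedSpace ℝ X]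

theorem Submodule.isCompact_of_subset {Y : Submodule ℝ X} [FiniteDimensional ℝ Y] {s : Set X}
    (hsY : s ⊆ Y) (hs : IsClosed s) (hsb : Bornology.IsBounded s) : IsCompact s := by
  have : ProperSpace Y := FiniteDimensional.proper ℝ Y
  rw [← Topology.IsInducing.subtypeVal.isCompact_preimage_iff (by simpa using hsY)]
  exact Metric.isCompact_of_isClosed_isBounded (hs.preimage continuous_subtype_val)
    (isometry_subtype_coe.antilipschitz.isBounded_preimage hsb)

theorem Submodule.exists_finite_norming {Y : Submodule ℝ X} [FiniteDimensional ℝ Y] {r : ℝ}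
    (hr : r < 1) : ∃ G : Set (StrongDual ℝ X), G.Finite ∧ (∀ g ∈ G, ‖g‖ ≤ 1) ∧
      ∀ y ∈ Y, ‖y‖ = 1 → ∃ g ∈ G, r < g y := by
  have hK : IsCompact (Metric.sphere (0 : X) 1 ∩ Y) :=
    Y.isCompact_of_subset inter_subset_right
      (Metric.isClosed_sphere.inter Y.closed_of_finiteDimensional)
      (Metric.isBounded_sphere.subset inter_subset_left)
  have hcover : Metric.sphere (0 : X) 1 ∩ Y ⊆
      ⋃ g ∈ Metric.closedBall (0 : StrongDual ℝ X) 1, {y | r < g y} := by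
    rintro y ⟨hy, -⟩
    rw [mem_sphere_zero_iff_norm] at hy
    obtain ⟨g, hg, hgy⟩ := exists_dual_vector ℝ y (by simp [hy])
    exact mem_iUnion₂.2 ⟨g, by simp [hg], by simp [hgy, hy, hr]⟩
  obtain ⟨G, hGball, hG, hGcover⟩ := hK.elim_finite_subcover_image
    (fun g _ => isOpen_lt continuous_const g.continuous) hcover
  refine ⟨G, hG, fun g hg => by simpa using hGball hg, fun y hyY hy => ?_⟩
  simpa using hGcover ⟨by simpa using hy, hyY⟩

theorem Submodule.exists_finite_symm_norming {Y : Submodule ℝ X} [FiniteDimensional ℝ Y] {r : ℝ}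
    (hr : r < 1) : ∃ G : Set (StrongDual ℝ X), G.Finite ∧ (∀ g ∈ G, -g ∈ G) ∧
      (∀ g ∈ G, ‖g‖ ≤ 1) ∧ ∀ y ∈ Y, ∃ g ∈ G, r * ‖y‖ ≤ g y := by
  obtain ⟨G, hG, hGle, hGnorming⟩ := Y.exists_finite_norming hr
  refine ⟨insert 0 (G ∪ -G), (hG.union hG.neg).insert 0, ?_, ?_, fun y hy => ?_⟩
  · rintro g (rfl | hg | hg)
    · simp
    · simp [hg]
    · simp_all
  · rintro g (rfl | hg | hg)
    · simp
    · exact hGle g hg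
    · simpa using hGle (-g) hg
  rcases eq_or_ne y 0 with rfl | hy0
  · exact ⟨0, mem_insert _ _, by simp⟩
  have hny : 0 < ‖y‖ := norm_pos_iff.2 hy0
  obtain ⟨g, hg, hgy⟩ := hGnorming (‖y‖⁻¹ • y) (Y.smul_mem _ hy) (by simp [norm_smul, hny.ne'])
  refine ⟨g, mem_insert_of_mem _ (Or.inl hg), ?_⟩
  rw [map_smul, smul_eq_mul, lt_inv_mul_iff₀ hny] at hgy
  linarith [mul_comm r ‖y‖]

end FiniteDimensional

section Polytope

variable {X : Type*} [NormedAddCommGroup X] [NormedSpace ℝ X]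

theorem Submodule.injOn_extremePoints_polyhedron (Y : Submodule ℝ X) {F : Set (StrongDual ℝ X)}
    (hF : F.Finite) :
    InjOn (fun x => {f ∈ F | f x = 1}) (extremePoints ℝ {y | y ∈ Y ∧ ∀ f ∈ F, f y ≤ 1}) := by
  set K := {y | y ∈ Y ∧ ∀ f ∈ F, f y ≤ 1}
  intro x₁ hx₁ x₂ hx₂ hact
  set v := x₂ - x₁
  have hv : ∀ f ∈ F, f x₁ = 1 → f v = 0 := fun f hf h₁ => by
    have : f ∈ {f ∈ F | f x₂ = 1} := by simp only at hact; exact hact ▸ ⟨hf, h₁⟩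
    simp [v, this.2, h₁]
  have hline : ∀ᶠ t in 𝓝 (0 : ℝ), x₁ + t • v ∈ K := by
    have hF' : ∀ᶠ t in 𝓝 (0 : ℝ), ∀ f ∈ F, f (x₁ + t • v) ≤ 1 := by
      refine hF.eventually_all.2 fun f hf => ?_
      rcases (hx₁.1.2 f hf).eq_or_lt with h₁ | h₁
      · exact Eventually.of_forall fun t => by simp [h₁, hv f hf h₁]
      · have : Tendsto (fun t : ℝ => f (x₁ + t • v)) (𝓝 0) (𝓝 (f x₁)) := by
          simpa using (Continuous.tendsto (by fun_prop) 0 :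
            Tendsto (fun t : ℝ => f (x₁ + t • v)) (𝓝 0) (𝓝 (f (x₁ + (0 : ℝ) • v))))
        exact (this.eventually (gt_mem_nhds h₁)).mono fun t ht => ht.le
    filter_upwards [hF'] with t ht
    exact ⟨Y.add_mem hx₁.1.1 (Y.smul_mem _ (Y.sub_mem hx₂.1.1 hx₁.1.1)), ht⟩
  have hline' : ∀ᶠ t in 𝓝 (0 : ℝ), x₁ + (-t) • v ∈ K :=
    (continuous_neg.tendsto' 0 0 neg_zero).eventually hline
  obtain ⟨t, ⟨hplus, hminus⟩, ht⟩ :=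
    (((hline.and hline').filter_mono nhdsWithin_le_nhds).and
      (self_mem_nhdsWithin : Ioi (0 : ℝ) ∈ 𝓝[>] 0)).exists
  have hseg : x₁ ∈ openSegment ℝ (x₁ + (-t) • v) (x₁ + t • v) :=
    ⟨1 / 2, 1 / 2, by norm_num, by norm_num, by norm_num, by module⟩
  have htv : t • v = 0 := by
    simpa using (mem_extremePoints.1 hx₁).2 _ hminus _ hplus hseg |>.2
  have : v = 0 := (smul_eq_zero.1 htv).resolve_left (ne_of_gt ht)
  exact (sub_eq_zero.1 this).symm

theorem Submodule.exists_finite_convexHull_eq (Y : Submodule ℝ X) [FiniteDimensional ℝ Y]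
    {F : Set (StrongDual ℝ X)} (hF : F.Finite)
    (hK : Bornology.IsBounded {y | y ∈ Y ∧ ∀ f ∈ F, f y ≤ 1}) :
    ∃ T : Set X, T.Finite ∧ {y | y ∈ Y ∧ ∀ f ∈ F, f y ≤ 1} = convexHull ℝ T := by
  set K := {y | y ∈ Y ∧ ∀ f ∈ F, f y ≤ 1}
  have hKeq : K = (Y : Set X) ∩ ⋂ f ∈ F, {y | f y ≤ 1} := by ext; simp [K]
  have hKclosed : IsClosed K := hKeq ▸ Y.closed_of_finiteDimensional.inter
    (isClosed_biInter fun (f : StrongDual ℝ X) _ => isClosed_le f.continuous continuous_const)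
  have hKconvex : Convex ℝ K := hKeq ▸ Y.convex.inter
    (convex_iInter₂ fun (f : StrongDual ℝ X) _ => convex_halfSpace_le f.isLinear 1)
  have hext : (extremePoints ℝ K).Finite :=
    (hF.finite_subsets.subset (by rintro _ ⟨x, -, rfl⟩; exact sep_subset _ _)).of_finite_image
      (Y.injOn_extremePoints_polyhedron hF)
  refine ⟨extremePoints ℝ K, hext, ?_⟩
  rw [← (hext.isCompact_convexHull ℝ).isClosed.closure_eq]
  exact (closure_convexHull_extremePoints
    (Y.isCompact_of_subset (fun y hy => hy.1) hKclosed hK) hKconvex).symm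

end Polytope

section SupportFunction

variable {X : Type*} [NormedAddCommGroup X] [NormedSpace ℝ X] {D : Set (StrongDual ℝ X)} {C : ℝ}

def supportFun (D : Set (StrongDual ℝ X)) (x : X) : ℝ :=
  sSup ((fun f : StrongDual ℝ X => f x) '' D)

def FiniteNearSup (D : Set (StrongDual ℝ X)) : Prop :=
  ∀ x, supportFun D x = 1 → ∃ θ > 0, {f ∈ D | 1 - θ < f x}.Finite

theorem apply_le_mul_norm_of_mem (hC : ∀ f ∈ D, ‖f‖ ≤ C) {f : StrongDual ℝ X} (hf : f ∈ D)
    (x : X) : f x ≤ C * ‖x‖ :=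
  (le_abs_self _).trans (f.le_of_opNorm_le (hC f hf) x)

theorem apply_le_supportFun (hC : ∀ f ∈ D, ‖f‖ ≤ C) {f : StrongDual ℝ X} (hf : f ∈ D) (x : X) :
    f x ≤ supportFun D x :=
  le_csSup ⟨C * ‖x‖, by rintro _ ⟨g, hg, rfl⟩; exact apply_le_mul_norm_of_mem hC hg x⟩
    (mem_image_of_mem _ hf)

theorem supportFun_le (hD : D.Nonempty) (hC : ∀ f ∈ D, ‖f‖ ≤ C) (x : X) :
    supportFun D x ≤ C * ‖x‖ :=
  csSup_le (hD.image _) (by rintro _ ⟨f, hf, rfl⟩; exact apply_le_mul_norm_of_mem hC hf x)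

theorem supportFun_add_le (hD : D.Nonempty) (hC : ∀ f ∈ D, ‖f‖ ≤ C) (x y : X) :
    supportFun D (x + y) ≤ supportFun D x + supportFun D y :=
  csSup_le (hD.image _) <| by
    rintro _ ⟨f, hf, rfl⟩
    simpa only [map_add] using
      add_le_add (apply_le_supportFun hC hf x) (apply_le_supportFun hC hf y)

theorem supportFun_smul (hneg : ∀ f ∈ D, -f ∈ D) (a : ℝ) (x : X) :
    supportFun D (a • x) = ‖a‖ * supportFun D x := by
  have hsign : ∀ f ∈ D, ∃ g ∈ D, f (a • x) = |a| * g x ∧ |a| * f x = g (a • x) := by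
    intro f hf
    rcases le_or_gt 0 a with ha | ha
    · exact ⟨f, hf, by simp [abs_of_nonneg ha], by simp [abs_of_nonneg ha]⟩
    · exact ⟨-f, hneg f hf, by simp [abs_of_neg ha], by simp [abs_of_neg ha]⟩
  have himage : (fun f : StrongDual ℝ X => f (a • x)) '' D
      = |a| • ((fun f : StrongDual ℝ X => f x) '' D) := by
    rw [← image_smul, image_image]
    ext t
    constructor
    · rintro ⟨f, hf, rfl⟩
      obtain ⟨g, hg, hfg, -⟩ := hsign f hf
      exact ⟨g, hg, by simp [hfg]⟩
    · rintro ⟨f, hf, rfl⟩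
      obtain ⟨g, hg, -, hfg⟩ := hsign f hf
      exact ⟨g, hg, by simp [hfg]⟩
  rw [supportFun, himage, Real.sSup_smul_of_nonneg (abs_nonneg a)]
  rfl

theorem supportFun_zero (hneg : ∀ f ∈ D, -f ∈ D) : supportFun D (0 : X) = 0 := by
  simpa using supportFun_smul hneg 0 (0 : X)

theorem continuous_supportFun (hD : D.Nonempty) (hC : ∀ f ∈ D, ‖f‖ ≤ C) :
    Continuous (supportFun D) := by
  refine (LipschitzWith.of_le_add_mul C.toNNReal fun x y => ?_).continuous
  calc supportFun D x = supportFun D (y + (x - y)) := by rw [add_sub_cancel]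
    _ ≤ supportFun D y + C * ‖x - y‖ := by
      grw [supportFun_add_le hD hC, supportFun_le hD hC (x - y)]
    _ ≤ supportFun D y + C.toNNReal * dist x y := by
      rw [dist_eq_norm]
      gcongr
      exact Real.le_coe_toNNReal C

theorem exists_apply_eq_supportFun (hC : ∀ f ∈ D, ‖f‖ ≤ C) (hfin : FiniteNearSup D) {x : X}
    (hx : supportFun D x = 1) : ∃ f ∈ D, f x = 1 := by
  obtain ⟨θ, hθ, hfinθ⟩ := hfin x hx
  have hne : ((fun f : StrongDual ℝ X => f x) '' D).Nonempty := by
    by_contra h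
    simp [supportFun, not_nonempty_iff_eq_empty.1 h] at hx
  obtain ⟨_, ⟨f₀, hf₀, rfl⟩, hlt⟩ :=
    exists_lt_of_lt_csSup hne (show 1 - θ < supportFun D x by linarith)
  obtain ⟨f, ⟨hfD, -⟩, hmax⟩ := exists_max_image _ (fun f : StrongDual ℝ X => f x) hfinθ
    ⟨f₀, hf₀, hlt⟩
  refine ⟨f, hfD, le_antisymm (hx ▸ apply_le_supportFun hC hfD x) ?_⟩
  have : supportFun D x ≤ max (f x) (1 - θ) := by
    refine csSup_le hne ?_
    rintro _ ⟨g, hg, rfl⟩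
    by_cases hgθ : 1 - θ < g x
    · exact le_max_of_le_left (hmax g ⟨hg, hgθ⟩)
    · exact le_max_of_le_right (not_lt.1 hgθ)
  rw [hx] at this
  exact (le_max_iff.1 this).resolve_right (by linarith)

theorem FiniteNearSup.propertyStar (hfin : FiniteNearSup D) : PropertyStar D := by
  intro g hg x hx
  by_contra! hgx
  obtain ⟨θ, hθ, hfinθ⟩ := hfin x hx
  refine hg {h : WeakDual ℝ X | 1 - θ < h x} (isOpen_lt continuous_const
    (WeakDual.eval_continuous x)) (show 1 - θ < g x by linarith) (hfinθ.subset ?_)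
  exact fun f hf => hf

theorem FiniteNearSup.exists_finite_attaining (hfin : FiniteNearSup D) (hD : D.Nonempty)
    (hneg : ∀ f ∈ D, -f ∈ D) (hC : ∀ f ∈ D, ‖f‖ ≤ C) {K : Set X} (hK : IsCompact K)
    (hK1 : ∀ z ∈ K, supportFun D z = 1) : ∃ F ⊆ D, F.Finite ∧ ∀ z ∈ K, ∃ f ∈ F, f z = 1 := by
  have hatt := fun z hz => exists_apply_eq_supportFun hC hfin (hK1 z hz)
  choose! θ hθ hfinθ using hfin
  obtain ⟨t, htK, hcover⟩ := hK.elim_nhds_subcover (fun y => {z | supportFun D (z - y) < θ y})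
    fun y hy => (isOpen_lt ((continuous_supportFun hD hC).comp (continuous_sub_right y))
      continuous_const).mem_nhds (by simpa [supportFun_zero hneg] using hθ y (hK1 y hy))
  refine ⟨⋃ y ∈ t, {f ∈ D | 1 - θ y < f y}, iUnion₂_subset fun _ _ => sep_subset _ _,
    t.finite_toSet.biUnion fun y hy => hfinθ y (hK1 y (htK y hy)), fun z hz => ?_⟩
  obtain ⟨y, hy, hzy : supportFun D (z - y) < θ y⟩ := mem_iUnion₂.1 (hcover hz)
  obtain ⟨f, hfD, hfz⟩ := hatt z hz
  have : f (z - y) ≤ supportFun D (z - y) := apply_le_supportFun hC hfD _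
  rw [map_sub] at this
  exact ⟨f, mem_iUnion₂.2 ⟨y, hy, hfD, by linarith⟩, hfz⟩

theorem FiniteNearSup.isPolyhedralNorm (hfin : FiniteNearSup D) (hD : D.Nonempty)
    (hneg : ∀ f ∈ D, -f ∈ D) (hC : ∀ f ∈ D, ‖f‖ ≤ C) {c : ℝ} (hc : 0 < c)
    (hlow : ∀ x, c * ‖x‖ ≤ supportFun D x) : IsPolyhedralNorm (supportFun D) := by
  intro Y hY
  have hbdd : Bornology.IsBounded {y : X | supportFun D y ≤ 1} :=
    (Metric.isBounded_closedBall (x := 0) (r := c⁻¹)).subset fun y (hy : supportFun D y ≤ 1) => by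
      rw [mem_closedBall_zero_iff, ← one_div, le_div_iff₀ hc]
      linarith [hlow y]
  have hS : IsCompact {y | y ∈ Y ∧ supportFun D y = 1} :=
    Y.isCompact_of_subset (fun y hy => hy.1)
      (Y.closed_of_finiteDimensional.inter (isClosed_eq (continuous_supportFun hD hC)
        continuous_const))
      (hbdd.subset fun y hy => hy.2.le)
  obtain ⟨F, hFD, hF, hFatt⟩ := hfin.exists_finite_attaining hD hneg hC hS fun z hz => hz.2
  have hball : {y | y ∈ Y ∧ supportFun D y ≤ 1} = {y | y ∈ Y ∧ ∀ f ∈ F, f y ≤ 1} := by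
    ext y
    refine ⟨fun ⟨hyY, hy⟩ => ⟨hyY, fun f hf => (apply_le_supportFun hC (hFD hf) y).trans hy⟩,
      fun ⟨hyY, hy⟩ => ⟨hyY, ?_⟩⟩
    by_contra! h1
    have hpos : 0 < supportFun D y := by linarith
    obtain ⟨f, hf, hfz⟩ := hFatt ((supportFun D y)⁻¹ • y) ⟨Y.smul_mem _ hyY, by
      rw [supportFun_smul hneg, norm_inv, Real.norm_of_nonneg hpos.le, inv_mul_cancel₀ hpos.ne']⟩
    rw [map_smul, smul_eq_mul, inv_mul_eq_one₀ hpos.ne'] at hfz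
    linarith [hy f hf]
  rw [hball]
  exact Y.exists_finite_convexHull_eq hF (hbdd.subset fun y hy => (hball ▸ hy).2)

theorem FiniteNearSup.exists_polyhedral_boundary (hfin : FiniteNearSup D) (hD : D.Nonempty)
    (hneg : ∀ f ∈ D, -f ∈ D) (hC : ∀ f ∈ D, ‖f‖ ≤ C) {c : ℝ} (hc : 0 < c)
    (hlow : ∀ x, c * ‖x‖ ≤ supportFun D x) :
    ∃ ν : Seminorm ℝ X, IsEquivNorm ν ∧ IsPolyhedralNorm (fun z => ν z) ∧
      ∃ B : Set (StrongDual ℝ X), IsBoundaryFor (fun z => ν z) B ∧ PropertyStar B :=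
  ⟨Seminorm.of (supportFun D) (supportFun_add_le hD hC) (supportFun_smul hneg),
    ⟨c, C, hc, fun x => ⟨hlow x, supportFun_le hD hC x⟩⟩,
    hfin.isPolyhedralNorm hD hneg hC hc hlow, D,
    ⟨fun _ hf x => apply_le_supportFun hC hf x, fun _ hx => exists_apply_eq_supportFun hC hfin hx⟩,
    hfin.propertyStar⟩

end SupportFunction

theorem exists_strictAnti_tendsto_zero_gt {u : ℕ → ℝ} (hu : Tendsto u atTop (𝓝 0)) :
    ∃ ε : ℕ → ℝ, StrictAnti ε ∧ Tendsto ε atTop (𝓝 0) ∧ ∀ n, u n < ε n := by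
  obtain ⟨B, hB⟩ := hu.norm.bddAbove_range
  set d : ℕ → ℝ := fun n => ⨆ m, |u (n + m)|
  have hbdd : ∀ n, BddAbove (range fun m => |u (n + m)|) := fun n =>
    ⟨B, by rintro _ ⟨m, rfl⟩; exact hB ⟨n + m, rfl⟩⟩
  have hle : ∀ n m, |u (n + m)| ≤ d n := fun n m => le_ciSup (hbdd n) m
  have hd : Antitone d := antitone_nat_of_succ_le fun n =>
    ciSup_le fun m => by rw [show n + 1 + m = n + (m + 1) by omega]; exact hle n (m + 1)
  have hd0 : Tendsto d atTop (𝓝 0) := by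
    rw [Metric.tendsto_atTop]
    intro δ hδ
    obtain ⟨N, hN⟩ := Metric.tendsto_atTop.1 hu (δ / 2) (half_pos hδ)
    refine ⟨N, fun n hn => ?_⟩
    have hdn : d n ≤ δ / 2 := ciSup_le fun m => by
      simpa using (hN (n + m) (by omega)).le
    rw [Real.dist_eq, sub_zero, abs_of_nonneg ((abs_nonneg _).trans (hle n 0))]
    linarith
  refine ⟨fun n => d n + 1 / (n + 1), ?_, ?_, fun n => ?_⟩
  · exact hd.add_strictAnti fun m n hmn => one_div_lt_one_div_of_lt (by positivity)
      (by exact_mod_cast Nat.succ_lt_succ hmn)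
  · simpa using hd0.add tendsto_one_div_add_atTop_nhds_zero_nat
  · have := (le_abs_self (u n)).trans (by simpa using hle n 0)
    have : (0 : ℝ) < 1 / (n + 1) := by positivity
    linarith

theorem exists_weights {b : ℕ → ℝ} (hbpos : ∀ n, 1 ≤ n → 0 < b n)
    (hblim : Tendsto b atTop (𝓝 1)) :
    ∃ w r : ℕ → ℝ, Antitone w ∧ Tendsto w atTop (𝓝 1) ∧ (∀ k, r k < 1) ∧
      (∀ k, w (k + 1) < r k * w k) ∧ ∀ n, 1 ≤ n → 1 < r n * w n * b n := by
  have hu : Tendsto (fun n => (b n)⁻¹ - 1) atTop (𝓝 0) := by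
    simpa using (hblim.inv₀ one_ne_zero).sub_const 1
  obtain ⟨ε, hε, hε0, hεu⟩ := exists_strictAnti_tendsto_zero_gt hu
  set w : ℕ → ℝ := fun k => 1 + ε k
  have hw1 : ∀ k, 1 < w k := fun k => by
    linarith [hε.antitone.le_of_tendsto hε0 (k + 1), hε (Nat.lt_succ_self k)]
  set m : ℕ → ℝ := fun k => max (w (k + 1)) (b k)⁻¹
  have hmw : ∀ k, m k < w k := fun k =>
    max_lt (by simpa [w] using hε (Nat.lt_succ_self k)) (by linarith [hεu k])
  refine ⟨w, fun k => (1 + m k / w k) / 2, fun k l hkl => by simpa [w] using hε.antitone hkl,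
    by simpa using hε0.const_add 1, fun k => ?_, fun k => ?_, fun n hn => ?_⟩
  · have h₁ : m k / w k < 1 := (div_lt_one (by linarith [hw1 k])).2 (hmw k)
    dsimp only
    linarith
  · have h := hw1 k
    calc w (k + 1) ≤ m k := le_max_left _ _
      _ < (1 + m k / w k) / 2 * w k := by field_simp; linarith [hmw k]
  · have hbn := hbpos n hn
    have h := hw1 n
    calc 1 = (b n)⁻¹ * b n := (inv_mul_cancel₀ hbn.ne').symm
      _ ≤ m n * b n := by gcongr; exact le_max_right _ _
      _ < (1 + m n / w n) / 2 * w n * b n := by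
        gcongr
        field_simp
        linarith [hmw n]

theorem exists_finset_of_weighted_partial_sums {X I : Type*} [NormedAddCommGroup X] {s : I → X}
    (hs : Summable s) {w c : ℕ → ℝ} (hw : Antitone w) (hw1 : Tendsto w atTop (𝓝 1))
    (hwc : ∀ k, w (k + 1) < c k) {t : ℝ} (ht : t < 1)
    (hbound : ∀ σ : Finset I, ‖∑ i ∈ σ, s i‖ ≤ t)
    (hc : ∀ τ : Finset I, c τ.card * ‖∑ i ∈ τ, s i‖ ≤ 1) :
    ∃ E : Finset I, ∃ θ > 0, ∀ σ : Finset I, 1 - θ < w σ.card * ‖∑ i ∈ σ, s i‖ → σ ⊆ E := by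
  classical
  have hw1le : ∀ k, 1 ≤ w k := hw.le_of_tendsto hw1
  have hcpos : ∀ k, 0 < c k := fun k => by linarith [hw1le (k + 1), hwc k]
  obtain ⟨M, hM⟩ : ∃ M, ∀ m ≥ M, w m * t < (1 + t) / 2 := eventually_atTop.1 <|
    (hw1.mul_const t).eventually (gt_mem_nhds (by linarith))
  have hsmall : ∀ᶠ δ in 𝓝 (0 : ℝ), ∀ k ∈ Finset.range M, w (k + 1) * ((c k)⁻¹ + δ) + δ < 1 := by
    refine (eventually_all_finset _).2 fun k _ => ?_
    have : Tendsto (fun δ : ℝ => w (k + 1) * ((c k)⁻¹ + δ) + δ) (𝓝 0)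
        (𝓝 (w (k + 1) * ((c k)⁻¹ + 0) + 0)) := (Continuous.tendsto (by fun_prop) 0)
    refine this.eventually (gt_mem_nhds ?_)
    rw [add_zero, add_zero, ← div_eq_mul_inv, div_lt_one (hcpos k)]
    exact hwc k
  obtain ⟨δ, hδ, hδpos : 0 < δ⟩ := ((hsmall.filter_mono nhdsWithin_le_nhds).and
    (self_mem_nhdsWithin : Ioi (0 : ℝ) ∈ 𝓝[>] 0)).exists
  obtain ⟨E, hE⟩ := hs.vanishing (Metric.ball_mem_nhds 0 hδpos)
  refine ⟨E, min ((1 - t) / 2) δ, lt_min (by linarith) hδpos, fun σ hσ => ?_⟩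
  -- Long `σ`: `w |σ| * t` is below `1`. Short `σ ⊄ E`: the part in `E` has norm at most
  -- `(c |σ ∩ E|)⁻¹`, the rest is a tail of norm `< δ`, and `w |σ| ≤ w (|σ ∩ E| + 1)`.
  by_contra hσE
  rcases le_or_gt M σ.card with hMσ | hσM
  · have := mul_le_mul_of_nonneg_left (hbound σ) (zero_le_one.trans (hw1le σ.card))
    linarith [hM σ.card hMσ, min_le_left ((1 - t) / 2) δ]
  · have hτσ : σ ∩ E ⊂ σ := Finset.ssubset_iff_subset_ne.2
      ⟨Finset.inter_subset_left, fun h => hσE (Finset.inter_eq_left.1 h)⟩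
    have htail : ‖∑ i ∈ σ \ E, s i‖ < δ := mem_ball_zero_iff.1 (hE _ Finset.sdiff_disjoint)
    have hhead : ‖∑ i ∈ σ ∩ E, s i‖ ≤ (c (σ ∩ E).card)⁻¹ := by
      rw [← one_div, le_div_iff₀ (hcpos _)]
      linarith [hc (σ ∩ E)]
    have hnorm : ‖∑ i ∈ σ, s i‖ ≤ (c (σ ∩ E).card)⁻¹ + δ := by
      rw [← Finset.sum_inter_add_sum_sdiff σ E]
      exact (norm_add_le _ _).trans (by linarith)
    have hcard := Finset.card_lt_card hτσ
    have := hδ _ (Finset.mem_range.2 (hcard.trans hσM))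
    have := mul_le_mul (hw hcard) hnorm (norm_nonneg _) (zero_le_one.trans (hw1le _))
    linarith [min_le_right ((1 - t) / 2) δ]

section Basis

variable {X I : Type*} [NormedAddCommGroup X] [NormedSpace ℝ X] (e : I → X)
  (es : I → StrongDual ℝ X)

def basisProj (σ : Finset I) : X →L[ℝ] X :=
  ∑ i ∈ σ, (es i).smulRight (e i)

@[simp]
theorem basisProj_apply (σ : Finset I) (x : X) : basisProj e es σ x = ∑ i ∈ σ, es i x • e i := by
  simp [basisProj]

theorem basisProj_mem_span (σ : Finset I) (x : X) :
    basisProj e es σ x ∈ Submodule.span ℝ (e '' σ) := by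
  rw [basisProj_apply]
  exact Submodule.sum_mem _ fun i hi => Submodule.smul_mem _ _ (Submodule.subset_span ⟨i, hi, rfl⟩)

theorem norm_basisProj_le (hmonot : ∀ (σ : Finset I) (z : X), ‖∑ i ∈ σ, es i z • e i‖ ≤ ‖z‖)
    (σ : Finset I) : ‖basisProj e es σ‖ ≤ 1 :=
  ContinuousLinearMap.opNorm_le_bound _ zero_le_one fun x => by simpa using hmonot σ x

structure IsNormingFamily (r : ℕ → ℝ) (G : Finset I → Set (StrongDual ℝ X)) : Prop where
  finite σ : (G σ).Finite
  neg_mem {σ g} : g ∈ G σ → -g ∈ G σ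
  norm_le {σ g} : g ∈ G σ → ‖g‖ ≤ 1
  norming σ x : ∃ g ∈ G σ, r σ.card * ‖basisProj e es σ x‖ ≤ g (basisProj e es σ x)

theorem exists_isNormingFamily {r : ℕ → ℝ} (hr : ∀ k, r k < 1) :
    ∃ G, IsNormingFamily e es r G := by
  choose G hGfin hGneg hGle hGnorm using fun σ : Finset I =>
    have := FiniteDimensional.span_of_finite ℝ (σ.finite_toSet.image e)
    (Submodule.span ℝ (e '' σ)).exists_finite_symm_norming (hr σ.card)
  exact ⟨G, hGfin, hGneg _ _, hGle _ _, fun σ x => hGnorm σ _ (basisProj_mem_span e es σ x)⟩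

def weightedBoundary (w : ℕ → ℝ) (G : Finset I → Set (StrongDual ℝ X)) :
    Set (StrongDual ℝ X) :=
  ⋃ σ : Finset I, (fun g => w σ.card • g.comp (basisProj e es σ)) '' G σ

end Basis

section WeightedBoundary

variable {X I : Type*} [NormedAddCommGroup X] [NormedSpace ℝ X] {e : I → X}
  {es : I → StrongDual ℝ X} {w r : ℕ → ℝ} {G : Finset I → Set (StrongDual ℝ X)} {C : ℝ}

theorem mem_weightedBoundary {f : StrongDual ℝ X} : f ∈ weightedBoundary e es w G ↔
    ∃ σ, ∃ g ∈ G σ, w σ.card • g.comp (basisProj e es σ) = f := by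
  simp [weightedBoundary]

theorem norm_lt_one_of_forall_mul_norm_sum_le_one {S : ℕ → Set X} {b c : ℕ → ℝ}
    (hcover : Metric.sphere (0 : X) 1 = ⋃ (n : ℕ) (_ : 1 ≤ n), S n)
    (hb : ∀ n, 1 ≤ n → b n = sInf ((fun z : X =>
      sSup ((fun σ : Finset I => ‖∑ i ∈ σ, es i z • e i‖) ''
        {σ : Finset I | σ.card = n})) '' S n))
    (hcb : ∀ n, 1 ≤ n → 1 < c n * b n) (hc : ∀ n, 0 < c n) {x : X} (hx0 : x ≠ 0)
    (hx : ∀ σ : Finset I, c σ.card * ‖∑ i ∈ σ, es i x • e i‖ ≤ 1) : ‖x‖ < 1 := by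
  have hnx : 0 < ‖x‖ := norm_pos_iff.2 hx0
  have hz : ‖x‖⁻¹ • x ∈ Metric.sphere (0 : X) 1 := by simp [norm_smul, hnx.ne']
  obtain ⟨n, hn, hzS⟩ : ∃ n, 1 ≤ n ∧ ‖x‖⁻¹ • x ∈ S n := by simpa [hcover] using hz
  have hsup : sSup ((fun σ : Finset I => ‖∑ i ∈ σ, es i (‖x‖⁻¹ • x) • e i‖) ''
      {σ : Finset I | σ.card = n}) ≤ (c n * ‖x‖)⁻¹ := by
    refine Real.sSup_le ?_ (by have := hc n; positivity)
    rintro _ ⟨σ, hσ : σ.card = n, rfl⟩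
    have hσx : ‖∑ i ∈ σ, es i x • e i‖ ≤ (c n)⁻¹ := by
      rw [← one_div, le_div_iff₀' (hc n)]
      exact hσ ▸ hx σ
    dsimp only
    rw [← basisProj_apply, map_smul, basisProj_apply, norm_smul, norm_inv, norm_norm, mul_inv,
      mul_comm (c n)⁻¹]
    gcongr
  have hbn : b n ≤ (c n * ‖x‖)⁻¹ := by
    rw [hb n hn]
    refine (csInf_le ⟨0, ?_⟩ (mem_image_of_mem _ hzS)).trans hsup
    rintro _ ⟨z, -, rfl⟩
    exact Real.sSup_nonneg (by rintro _ ⟨σ, -, rfl⟩; exact norm_nonneg _)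
  have hcn := hc n
  have : b n * (c n * ‖x‖) ≤ 1 :=
    calc b n * (c n * ‖x‖) ≤ (c n * ‖x‖)⁻¹ * (c n * ‖x‖) := by gcongr
      _ = 1 := inv_mul_cancel₀ (mul_pos hcn hnx).ne'
  nlinarith [hcb n hn]

namespace IsNormingFamily

variable (hG : IsNormingFamily e es r G)
include hG

theorem weightedBoundary_nonempty : (weightedBoundary e es w G).Nonempty :=
  let ⟨g, hg, _⟩ := hG.norming ∅ 0
  ⟨_, mem_weightedBoundary.2 ⟨∅, g, hg, rfl⟩⟩

theorem neg_mem_weightedBoundary {f : StrongDual ℝ X} (hf : f ∈ weightedBoundary e es w G) :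
    -f ∈ weightedBoundary e es w G := by
  obtain ⟨σ, g, hg, rfl⟩ := mem_weightedBoundary.1 hf
  exact mem_weightedBoundary.2
    ⟨σ, -g, hG.neg_mem hg, by rw [ContinuousLinearMap.neg_comp, smul_neg]⟩

theorem norm_le_of_mem_weightedBoundary
    (hmonot : ∀ (σ : Finset I) (z : X), ‖∑ i ∈ σ, es i z • e i‖ ≤ ‖z‖) (hw : Antitone w)
    (hw0 : ∀ k, 0 ≤ w k) {f : StrongDual ℝ X} (hf : f ∈ weightedBoundary e es w G) :
    ‖f‖ ≤ w 0 := by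
  obtain ⟨σ, g, hg, rfl⟩ := mem_weightedBoundary.1 hf
  calc ‖w σ.card • g.comp (basisProj e es σ)‖ ≤ w σ.card * (‖g‖ * ‖basisProj e es σ‖) := by
        rw [norm_smul, Real.norm_of_nonneg (hw0 _)]
        gcongr
        exacts [hw0 _, ContinuousLinearMap.opNorm_comp_le g (basisProj e es σ)]
    _ ≤ w σ.card := mul_le_of_le_one_right (hw0 _)
        (mul_le_one₀ (hG.norm_le hg) (norm_nonneg _) (norm_basisProj_le e es hmonot σ))
    _ ≤ w 0 := hw (Nat.zero_le _)

theorem mul_norm_le_supportFun (hC : ∀ f ∈ weightedBoundary e es w G, ‖f‖ ≤ C)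
    (hw0 : ∀ k, 0 ≤ w k) (σ : Finset I) (x : X) :
    r σ.card * w σ.card * ‖∑ i ∈ σ, es i x • e i‖ ≤ supportFun (weightedBoundary e es w G) x := by
  obtain ⟨g, hg, hgx⟩ := hG.norming σ x
  rw [← basisProj_apply]
  calc r σ.card * w σ.card * ‖basisProj e es σ x‖
      = w σ.card * (r σ.card * ‖basisProj e es σ x‖) := by ring
    _ ≤ w σ.card * g (basisProj e es σ x) := by gcongr; exact hw0 _
    _ ≤ _ := apply_le_supportFun hC (mem_weightedBoundary.2 ⟨σ, g, hg, rfl⟩) x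

theorem norm_le_supportFun
    (hconv : ∀ z : X, Tendsto (fun σ : Finset I => ∑ i ∈ σ, es i z • e i) atTop (𝓝 z))
    (hC : ∀ f ∈ weightedBoundary e es w G, ‖f‖ ≤ C) (hw0 : ∀ k, 0 ≤ w k)
    (hrw : ∀ k, 1 ≤ r k * w k) (x : X) : ‖x‖ ≤ supportFun (weightedBoundary e es w G) x :=
  le_of_tendsto (hconv x).norm <| Eventually.of_forall fun σ =>
    (le_mul_of_one_le_left (norm_nonneg _) (hrw σ.card)).trans
      (hG.mul_norm_le_supportFun hC hw0 σ x)

theorem finiteNearSup {S : ℕ → Set X} {b : ℕ → ℝ}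
    (hmonot : ∀ (σ : Finset I) (z : X), ‖∑ i ∈ σ, es i z • e i‖ ≤ ‖z‖)
    (hconv : ∀ z : X, Tendsto (fun σ : Finset I => ∑ i ∈ σ, es i z • e i) atTop (𝓝 z))
    (hcover : Metric.sphere (0 : X) 1 = ⋃ (n : ℕ) (_ : 1 ≤ n), S n)
    (hb : ∀ n, 1 ≤ n → b n = sInf ((fun z : X =>
      sSup ((fun σ : Finset I => ‖∑ i ∈ σ, es i z • e i‖) ''
        {σ : Finset I | σ.card = n})) '' S n))
    (hw : Antitone w) (hw1 : Tendsto w atTop (𝓝 1)) (hwr : ∀ k, w (k + 1) < r k * w k)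
    (hrwb : ∀ n, 1 ≤ n → 1 < r n * w n * b n) : FiniteNearSup (weightedBoundary e es w G) := by
  have hw1le : ∀ k, 1 ≤ w k := hw.le_of_tendsto hw1
  have hw0 : ∀ k, 0 ≤ w k := fun k => zero_le_one.trans (hw1le k)
  have hC := fun f => hG.norm_le_of_mem_weightedBoundary hmonot hw hw0 (f := f)
  intro x hx
  have hx0 : x ≠ 0 := by
    rintro rfl
    simp [supportFun_zero fun _ => hG.neg_mem_weightedBoundary] at hx
  have hrw : ∀ τ : Finset I, r τ.card * w τ.card * ‖∑ i ∈ τ, es i x • e i‖ ≤ 1 := fun τ =>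
    hx ▸ hG.mul_norm_le_supportFun hC hw0 τ x
  have hx1 : ‖x‖ < 1 := norm_lt_one_of_forall_mul_norm_sum_le_one hcover hb hrwb
    (fun k => zero_lt_one.trans_le ((hw1le (k + 1)).trans (hwr k).le)) hx0 hrw
  obtain ⟨E, θ, hθ, hE⟩ := exists_finset_of_weighted_partial_sums ⟨x, hconv x⟩ hw hw1 hwr hx1
    (fun σ => hmonot σ x) hrw
  refine ⟨θ, hθ, (E.powerset.finite_toSet.biUnion fun σ _ => (hG.finite σ).image
    (fun g => w σ.card • g.comp (basisProj e es σ))).subset ?_⟩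
  rintro f ⟨hfD, hfx⟩
  obtain ⟨σ, g, hg, rfl⟩ := mem_weightedBoundary.1 hfD
  have hgx : g (basisProj e es σ x) ≤ ‖∑ i ∈ σ, es i x • e i‖ := by
    simpa using (le_abs_self _).trans (g.le_of_opNorm_le (hG.norm_le hg) (basisProj e es σ x))
  have hσ : 1 - θ < w σ.card * ‖∑ i ∈ σ, es i x • e i‖ :=
    hfx.trans_le (by simpa using mul_le_mul_of_nonneg_left hgx (hw0 σ.card))
  exact mem_iUnion₂.2 ⟨σ, Finset.mem_coe.2 (Finset.mem_powerset.2 (hE σ hσ)), g, hg, rfl⟩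

end IsNormingFamily

end WeightedBoundary

open Classical in
theorem stmt15_general {X I : Type*} [NormedAddCommGroup X] [NormedSpace ℝ X]
    (e : I → X) (es : I → StrongDual ℝ X)
    (hmonot : ∀ (σ : Finset I) (z : X), ‖∑ i ∈ σ, es i z • e i‖ ≤ ‖z‖)
    (hconv : ∀ z : X,
      Tendsto (fun σ : Finset I => ∑ i ∈ σ, es i z • e i) atTop (𝓝 z))
    (S : ℕ → Set X) (b : ℕ → ℝ)
    (hcover : Metric.sphere (0 : X) 1 = ⋃ (n : ℕ) (_ : 1 ≤ n), S n)
    (hb : ∀ n, 1 ≤ n → b n = sInf ((fun z : X =>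
      sSup ((fun σ : Finset I => ‖∑ i ∈ σ, es i z • e i‖) ''
        {σ : Finset I | σ.card = n})) '' S n))
    (hbpos : ∀ n, 1 ≤ n → 0 < b n)
    (hblim : Tendsto b atTop (𝓝 1)) :
    ∃ ν : Seminorm ℝ X, IsEquivNorm ν ∧ IsPolyhedralNorm (fun z => ν z) ∧
      ∃ D : Set (StrongDual ℝ X), IsBoundaryFor (fun z => ν z) D ∧ PropertyStar D := by
  obtain ⟨w, r, hw, hw1, hr, hwr, hrwb⟩ := exists_weights hbpos hblim
  obtain ⟨G, hG⟩ := exists_isNormingFamily e es hr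
  have hw1le : ∀ k, 1 ≤ w k := hw.le_of_tendsto hw1
  have hw0 : ∀ k, 0 ≤ w k := fun k => zero_le_one.trans (hw1le k)
  have hC := fun f => hG.norm_le_of_mem_weightedBoundary hmonot hw hw0 (f := f)
  have hrw : ∀ k, 1 ≤ r k * w k := fun k => (hw1le (k + 1)).trans (hwr k).le
  refine (hG.finiteNearSup hmonot hconv hcover hb hw hw1 hwr hrwb).exists_polyhedral_boundary
    hG.weightedBoundary_nonempty (fun _ => hG.neg_mem_weightedBoundary) hC one_pos fun x => ?_
  simpa using hG.norm_le_supportFun hconv hC hw0 hrw x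

open Classical in
theorem stmt15 {X I : Type*} [NormedAddCommGroup X] [NormedSpace ℝ X] [CompleteSpace X]
    (e : I → X) (es : I → StrongDual ℝ X)
    (hbi : ∀ i j, es i (e j) = if i = j then 1 else 0)
    (hmonot : ∀ (σ : Finset I) (z : X), ‖∑ i ∈ σ, es i z • e i‖ ≤ ‖z‖)
    (hconv : ∀ z : X,
      Tendsto (fun σ : Finset I => ∑ i ∈ σ, es i z • e i) atTop (𝓝 z))
    (S : ℕ → Set X) (b : ℕ → ℝ)
    (hS : ∀ n, S n ⊆ Metric.sphere (0 : X) 1)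
    (hcover : Metric.sphere (0 : X) 1 = ⋃ (n : ℕ) (_ : 1 ≤ n), S n)
    (hb : ∀ n, 1 ≤ n → b n = sInf ((fun z : X =>
      sSup ((fun σ : Finset I => ‖∑ i ∈ σ, es i z • e i‖) ''
        {σ : Finset I | σ.card = n})) '' S n))
    (hbpos : ∀ n, 1 ≤ n → 0 < b n)
    (hblim : Tendsto b atTop (𝓝 1)) :
    ∃ ν : Seminorm ℝ X, IsEquivNorm ν ∧ IsPolyhedralNorm (fun z => ν z) ∧
      ∃ D : Set (StrongDual ℝ X), IsBoundaryFor (fun z => ν z) D ∧ PropertyStar D :=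
  stmt15_general e es hmonot hconv S b hcover hb hbpos hblim

end
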